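/- Subsegment property of the total order construction in ℤ^2: let θ be a linear order on ℤ, let p ≤ q ≤ r coordinatewise in ℤ^2, and suppose q lies on the total-order-construction path R(p,r). Then the total-order-construction path R(p,q) is a prefix of R(p,r): the first (q_1 - p_1)+(q_2 - p_2) steps of R(p,r) coincide with R(p,q). -/

import Mathlib

/-!
After `j` steps the path `R(p,u)` lies on the antidiagonal `x₁ + x₂ = p₁ + p₂ + j`, and it has
stepped in `x₁` exactly at those levels `t < p₁ + p₂ + j` that are among the `u₁ - p₁`
`θ`-smallest elements of `[p₁ + p₂, u₁ + u₂ - 1]`. For `u = s` this set of levels is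
`θ`-downward closed, hence so is its trace `L` on `J = [p₁ + p₂, q₁ + q₂ - 1]`. If `R(p,s)` visits
`q`, then `#L = q₁ - p₁`, so `L` consists of the `q₁ - p₁` `θ`-smallest elements of `J`: at every
level of `J` the paths `R(p,s)` and `R(p,q)` take the same step.
-/

open scoped Classical

/-- One step of the total order construction in `ℤ²` for the positive quadrant:
from the point `m`, step in the `x₁` direction if `m.1 + m.2` is among the
`q.1 - p.1` smallest elements (w.r.t. `r`) of the interval
`[p.1 + p.2, q.1 + q.2 - 1]`, and otherwise step in the `x₂` direction. -/
noncomputable def step2 (r : ℤ → ℤ → Prop) (p q m : ℤ × ℤ) : ℤ × ℤ :=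
  if ((Finset.Icc (p.1 + p.2) (q.1 + q.2 - 1)).filter
      (fun y => r y (m.1 + m.2))).card < (q.1 - p.1).toNat
  then (m.1 + 1, m.2) else (m.1, m.2 + 1)

/-- The point visited after `j` steps of the total order construction path
from `p` towards `q` generated by the order `r`. -/
noncomputable def path2 (r : ℤ → ℤ → Prop) (p q : ℤ × ℤ) : ℕ → ℤ × ℤ
  | 0 => p
  | j + 1 => step2 r p q (path2 r p q j)

open Finset

section RelRank

variable {α : Type*} (r : α → α → Prop)

theorem card_filter_rel_le_of_rel [IsTrans α r] (I : Finset α) {y t : α} (hyt : r y t) :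
    #(I.filter (r · y)) ≤ #(I.filter (r · t)) :=
  card_le_card fun z hz => by
    rw [mem_filter] at hz ⊢
    exact ⟨hz.1, trans_of r hz.2 hyt⟩

theorem iff_card_filter_rel_lt_card_filter [Std.Irrefl r] [Std.Trichotomous r] {P : α → Prop}
    (hP : ∀ y t, r y t → P t → P y) (J : Finset α) {t : α} (ht : t ∈ J) :
    P t ↔ #(J.filter (r · t)) < #(J.filter P) := by
  constructor
  · intro hPt
    have htP : t ∈ J.filter P := mem_filter.mpr ⟨ht, hPt⟩
    calc #(J.filter (r · t)) ≤ #((J.filter P).erase t) := card_le_card fun y hy => by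
          rw [mem_filter] at hy
          exact mem_erase.mpr ⟨fun hyt => irrefl_of r t (hyt ▸ hy.2),
            mem_filter.mpr ⟨hy.1, hP y t hy.2 hPt⟩⟩
      _ < #(J.filter P) := card_erase_lt_of_mem htP
  · intro hlt
    by_contra hPt
    have hsub : J.filter P ⊆ J.filter (r · t) := fun y hy => by
      rw [mem_filter] at hy ⊢
      refine ⟨hy.1, ?_⟩
      rcases trichotomous_of r y t with hyt | rfl | hty
      · exact hyt
      · exact absurd hy.2 hPt
      · exact absurd (hP t y hty hy.2) hPt
    exact (card_le_card hsub).not_gt hlt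

end RelRank

/-- `R(p,u)` steps in `x₁` from its point on the antidiagonal `x₁ + x₂ = t`. -/
def StepsFirst (r : ℤ → ℤ → Prop) (p u : ℤ × ℤ) (t : ℤ) : Prop :=
  #((Icc (p.1 + p.2) (u.1 + u.2 - 1)).filter (r · t)) < (u.1 - p.1).toNat

section Path

variable (r : ℤ → ℤ → Prop) (p u : ℤ × ℤ)

theorem stepsFirst_of_rel [IsTrans ℤ r] {y t : ℤ} (hyt : r y t) (ht : StepsFirst r p u t) :
    StepsFirst r p u y :=
  (card_filter_rel_le_of_rel r _ hyt).trans_lt ht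

theorem path2_fst_add_snd :
    ∀ j : ℕ, (path2 r p u j).1 + (path2 r p u j).2 = p.1 + p.2 + j
  | 0 => by simp [path2]
  | j + 1 => by
    have ih := path2_fst_add_snd j
    unfold path2 step2
    split <;> simp only [Nat.cast_add, Nat.cast_one] <;> linarith

theorem path2_succ (j : ℕ) :
    path2 r p u (j + 1) =
      if StepsFirst r p u (p.1 + p.2 + j)
      then ((path2 r p u j).1 + 1, (path2 r p u j).2)
      else ((path2 r p u j).1, (path2 r p u j).2 + 1) := by
  rw [path2, step2, path2_fst_add_snd]
  exact if_congr Iff.rfl rfl rfl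

theorem path2_fst :
    ∀ j : ℕ, (path2 r p u j).1 =
      p.1 + #((Ico (p.1 + p.2) (p.1 + p.2 + j)).filter (StepsFirst r p u))
  | 0 => by simp [path2]
  | j + 1 => by
    rw [path2_succ, Nat.cast_succ, ← add_assoc, Ico_add_one_right_eq_Icc,
      ← Ico_insert_right (by omega), filter_insert]
    split_ifs
    · rw [card_insert_of_notMem (by simp), path2_fst j]
      push_cast
      ring
    · exact path2_fst j

theorem path2_eq_of_stepsFirst_iff (v : ℤ × ℤ) (n : ℕ)
    (h : ∀ i < n, StepsFirst r p u (p.1 + p.2 + i) ↔ StepsFirst r p v (p.1 + p.2 + i)) :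
    ∀ j ≤ n, path2 r p u j = path2 r p v j
  | 0, _ => rfl
  | j + 1, hj => by
    rw [path2_succ, path2_succ, path2_eq_of_stepsFirst_iff v n h j (by omega),
      if_congr (h j hj) rfl rfl]

end Path

theorem stmt_14_general (r : ℤ → ℤ → Prop) (h : IsStrictTotalOrder ℤ r)
    (p q s : ℤ × ℤ)
    (hon : ∃ j ≤ ((s.1 - p.1) + (s.2 - p.2)).toNat, path2 r p s j = q) :
    ∀ j ≤ ((q.1 - p.1) + (q.2 - p.2)).toNat, path2 r p s j = path2 r p q j := by
  have := h
  obtain ⟨N, -, hqN⟩ := hon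
  have hlevel : q.1 + q.2 = p.1 + p.2 + N := hqN ▸ path2_fst_add_snd r p s N
  have hJ : Ico (p.1 + p.2) (p.1 + p.2 + N) = Icc (p.1 + p.2) (q.1 + q.2 - 1) := by
    rw [← Ico_add_one_right_eq_Icc, sub_add_cancel, hlevel]
  have hcount : #((Icc (p.1 + p.2) (q.1 + q.2 - 1)).filter (StepsFirst r p s)) =
      (q.1 - p.1).toNat := by
    have := path2_fst r p s N
    rw [hqN, hJ] at this
    omega
  rw [show ((q.1 - p.1) + (q.2 - p.2)).toNat = N by omega]
  refine path2_eq_of_stepsFirst_iff r p s q N fun i hi => ?_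
  have ht : p.1 + p.2 + i ∈ Icc (p.1 + p.2) (q.1 + q.2 - 1) := by
    rw [mem_Icc]
    omega
  rw [iff_card_filter_rel_lt_card_filter r (fun _ _ => stepsFirst_of_rel r p s) _ ht, hcount]
  rfl

theorem stmt_14 (r : ℤ → ℤ → Prop) (h : IsStrictTotalOrder ℤ r)
    (p q s : ℤ × ℤ) (hpq1 : p.1 ≤ q.1) (hpq2 : p.2 ≤ q.2)
    (hqs1 : q.1 ≤ s.1) (hqs2 : q.2 ≤ s.2)
    (hon : ∃ j ≤ ((s.1 - p.1) + (s.2 - p.2)).toNat, path2 r p s j = q) :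
    ∀ j ≤ ((q.1 - p.1) + (q.2 - p.2)).toNat, path2 r p s j = path2 r p q j :=
  stmt_14_general r h p q s hon
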